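/- For a smooth solution y of the autonomous ODE y' = R(y) with R smooth, the two-stage update y* = yⁿ + (Δt/2)R(yⁿ) + (Δt²/8)(R'·R)(yⁿ), y^{n+1} = yⁿ + Δt·R(yⁿ) + (Δt²/6)[(R'·R)(yⁿ) + 2(R'·R)(y*)] agrees with the exact solution at time tⁿ+Δt up to O(Δt⁵), i.e. the local truncation error is of order Δt⁵. -/

import Mathlib

/-!
Write `L F := F' · R`, so that `d/dt F (y t) = (L F) (y t)` along a solution of `y' = R y`. Then
`y⁽ᵏ⁺¹⁾ = (Lᵏ R) ∘ y`, and `R ∈ C⁴` makes `y` a `C⁵` function whose Taylor polynomial of degree 4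
at `tⁿ` is `yⁿ + t R + t²/2 · L R + t³/6 · L²R + t⁴/24 · L³R`, with an `O(t⁵)` remainder.

The scheme reads `yⁿ + t R + t²/6 · L R + t²/3 · (L R)(y*(t))`. Since `L R ∈ C³` and
`y*'(0) = R / 2`, `y*''(0) = L R / 4`, the second-order Taylor expansion of `(L R)(y*(t))` is
`L R + t/2 · L²R + t²/8 · L³R + O(t³)`. Multiplied by `t²/3`, this reproduces the cubic and
quartic Taylor terms of the solution exactly, so the two differ by `O(t⁵) + t² · O(t³)`.
-/

open Filter Asymptotics Set Topology

section

variable {E : Type*} [NormedAddCommGroup E] [NormedSpace ℝ E]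

theorem taylor_isBigO_univ {f : ℝ → E} {x₀ : ℝ} {n : ℕ} (hf : ContDiff ℝ (n + 1) f) :
    (fun x ↦ f x - taylorWithinEval f n univ x₀ x) =O[𝓝 x₀] fun x ↦ (x - x₀) ^ (n + 1) := by
  have hnext : (fun x ↦ taylorWithinEval f (n + 1) univ x₀ x - taylorWithinEval f n univ x₀ x)
      =O[𝓝 x₀] fun x ↦ (x - x₀) ^ (n + 1) := by
    simp only [taylorWithinEval_succ, add_sub_cancel_left]
    refine .of_bound (|((n + 1 : ℝ) * n.factorial)⁻¹| * ‖iteratedDerivWithin (n + 1) f univ x₀‖)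
      (.of_forall fun x ↦ ?_)
    rw [norm_smul, norm_mul, Real.norm_eq_abs, Real.norm_eq_abs]
    exact le_of_eq (by ring)
  have hrem := (taylor_isLittleO_univ (x₀ := x₀) (n := n + 1) (by exact_mod_cast hf)).isBigO
  exact (hrem.add hnext).congr_left fun x ↦ by abel

theorem contDiff_succ_of_hasDerivAt_comp {R : E → E} {y : ℝ → E} {n : ℕ} (hR : ContDiff ℝ n R)
    (hy : ∀ t, HasDerivAt y (R (y t)) t) : ContDiff ℝ (n + 1) y := by
  have hderiv : deriv y = R ∘ y := funext fun t ↦ (hy t).deriv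
  have hdiff : Differentiable ℝ y := fun t ↦ (hy t).differentiableAt
  induction n with
  | zero =>
    refine contDiff_succ_iff_deriv.2 ⟨hdiff, by simp, ?_⟩
    rw [hderiv]
    exact hR.comp (contDiff_zero.2 hdiff.continuous)
  | succ k ih =>
    refine contDiff_succ_iff_deriv.2 ⟨hdiff, by simp, ?_⟩
    rw [hderiv]
    exact_mod_cast hR.comp (ih (hR.of_le (Nat.cast_le.2 k.le_succ)))

end

noncomputable def lieDeriv (R F : ℝ → ℝ) (x : ℝ) : ℝ := deriv F x * R x

theorem ContDiff.lieDeriv {R F : ℝ → ℝ} {m : WithTop ℕ∞} (hF : ContDiff ℝ (m + 1) F)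
    (hR : ContDiff ℝ m R) : ContDiff ℝ m (lieDeriv R F) :=
  hF.deriv'.mul hR

theorem contDiff_iterate_lieDeriv {R : ℝ → ℝ} {m j : ℕ} (hR : ContDiff ℝ (m + j : ℕ) R) :
    ContDiff ℝ m ((lieDeriv R)^[j] R) := by
  induction j generalizing m with
  | zero => simpa using hR
  | succ j ih =>
    rw [Function.iterate_succ_apply']
    exact (ih (m := m + 1) (by rwa [Nat.add_right_comm, add_assoc])).lieDeriv
      (hR.of_le (Nat.cast_le.2 (by omega)))

section Solution

variable {R y : ℝ → ℝ}

theorem hasDerivAt_comp_lieDeriv {F : ℝ → ℝ} {t : ℝ} (hy : ∀ t, HasDerivAt y (R (y t)) t)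
    (hF : DifferentiableAt ℝ F (y t)) : HasDerivAt (fun s ↦ F (y s)) (lieDeriv R F (y t)) t :=
  hF.hasDerivAt.comp t (hy t)

theorem iteratedDeriv_succ_eq_iterate_lieDeriv {n k : ℕ} (hR : ContDiff ℝ n R)
    (hy : ∀ t, HasDerivAt y (R (y t)) t) (hk : k ≤ n) :
    iteratedDeriv (k + 1) y = (lieDeriv R)^[k] R ∘ y := by
  induction k with
  | zero => exact iteratedDeriv_one.trans (funext fun t ↦ (hy t).deriv)
  | succ k ih =>
    have hF : Differentiable ℝ ((lieDeriv R)^[k] R) :=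
      (contDiff_iterate_lieDeriv (m := 1) (hR.of_le (Nat.cast_le.2 (by omega)))).differentiable
        one_ne_zero
    rw [iteratedDeriv_succ, ih (by omega), Function.iterate_succ_apply']
    exact funext fun t ↦ (hasDerivAt_comp_lieDeriv hy (hF _)).deriv

theorem isBigO_sub_sum_iterate_lieDeriv {n : ℕ} (hR : ContDiff ℝ (n + 1) R)
    (hy : ∀ t, HasDerivAt y (R (y t)) t) (t₀ : ℝ) :
    (fun t ↦ y t - (y t₀ + ∑ k ∈ Finset.range (n + 1),
        ((k + 1).factorial : ℝ)⁻¹ * (t - t₀) ^ (k + 1) * (lieDeriv R)^[k] R (y t₀)))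
      =O[𝓝 t₀] fun t ↦ (t - t₀) ^ (n + 2) := by
  have hy' : ContDiff ℝ (n + 1 + 1 : ℕ) y := by
    exact_mod_cast contDiff_succ_of_hasDerivAt_comp hR hy
  have hR' : ContDiff ℝ (n + 1 : ℕ) R := by exact_mod_cast hR
  refine (taylor_isBigO_univ hy').congr_left fun t ↦ ?_
  rw [taylor_within_apply, Finset.sum_range_succ', add_comm]
  congr 2
  · simp
  · refine Finset.sum_congr rfl fun k hk ↦ ?_
    rw [iteratedDerivWithin_univ, smul_eq_mul, iteratedDeriv_succ_eq_iterate_lieDeriv hR' hy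
      (Finset.mem_range.1 hk).le, Function.comp_apply]

end Solution

section Predictor

variable {R F : ℝ → ℝ} {a : ℝ}

/-- The first stage `y*` of the scheme started at `a`, as a function of the step `t`. -/
noncomputable def predictor (R : ℝ → ℝ) (a t : ℝ) : ℝ :=
  a + t / 2 * R a + t ^ 2 / 8 * lieDeriv R R a

theorem hasDerivAt_predictor (t : ℝ) :
    HasDerivAt (predictor R a) (R a / 2 + t / 4 * lieDeriv R R a) t := by
  have h := ((((hasDerivAt_id' t).div_const 2).mul_const (R a)).const_add a).fun_add
    (((hasDerivAt_pow 2 t).div_const 8).mul_const (lieDeriv R R a))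
  exact h.congr_deriv (by simp only [one_div, Nat.cast_ofNat, Nat.add_one_sub_one, pow_one]; ring)

theorem isBigO_comp_predictor_sub_taylor (hF : ContDiff ℝ 3 F) :
    (fun t ↦ F (predictor R a t) - (F a + t * (deriv F a * R a / 2) +
        t ^ 2 / 2 * (deriv (deriv F) a * R a ^ 2 / 4 + deriv F a * lieDeriv R R a / 4)))
      =O[𝓝 0] fun t ↦ t ^ 3 := by
  have hF' : Differentiable ℝ (deriv F) := (hF.deriv' (n := 2)).differentiable two_ne_zero
  have hp : ContDiff ℝ 3 (predictor R a) := by unfold predictor; fun_prop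
  have hp0 : predictor R a 0 = a := by simp [predictor]
  have hfirst : deriv (fun t ↦ F (predictor R a t)) = fun t ↦
      deriv F (predictor R a t) * (R a / 2 + t / 4 * lieDeriv R R a) :=
    funext fun t ↦ ((hF.differentiable three_ne_zero _).hasDerivAt.comp t
      (hasDerivAt_predictor t)).deriv
  have hslope : HasDerivAt (fun t ↦ R a / 2 + t / 4 * lieDeriv R R a) (lieDeriv R R a / 4) 0 :=
    ((((hasDerivAt_id' 0).div_const 4).mul_const _).const_add _).congr_deriv (by ring)
  have hsecond : HasDerivAt (fun t ↦ deriv F (predictor R a t) * (R a / 2 + t / 4 * lieDeriv R R a))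
      (deriv (deriv F) a * R a ^ 2 / 4 + deriv F a * lieDeriv R R a / 4) 0 := by
    refine (((hF' _).hasDerivAt.comp 0 (hasDerivAt_predictor 0)).fun_mul hslope).congr_deriv ?_
    simp only [Function.comp_apply, hp0]
    ring
  refine ((taylor_isBigO_univ (n := 2) (x₀ := 0)
    (f := fun t ↦ F (predictor R a t)) (hF.comp hp)).congr_left fun t ↦ ?_).congr_right
    fun t ↦ by rw [sub_zero]
  simp only [taylor_within_apply, Finset.sum_range_succ, Finset.sum_range_zero,
    iteratedDerivWithin_univ, iteratedDeriv_succ, iteratedDeriv_zero, hfirst, hsecond.deriv, hp0,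
    Nat.factorial, smul_eq_mul, sub_zero]
  push_cast
  ring

end Predictor

/-- For a smooth solution y of y' = R(y), the two-stage fourth-order update has
local truncation error O(Δt⁵). -/
theorem stmt_2 (R : ℝ → ℝ) (hR : ContDiff ℝ 4 R) (y : ℝ → ℝ) (tn : ℝ)
    (hy : ∀ t, HasDerivAt y (R (y t)) t) :
    (fun Δt : ℝ =>
        y (tn + Δt) -
          (y tn + Δt * R (y tn) + Δt ^ 2 / 6 *
            (deriv R (y tn) * R (y tn) +
              2 * (deriv R (y tn + Δt / 2 * R (y tn) +
                      Δt ^ 2 / 8 * (deriv R (y tn) * R (y tn))) *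
                   R (y tn + Δt / 2 * R (y tn) +
                      Δt ^ 2 / 8 * (deriv R (y tn) * R (y tn)))))))
      =O[nhds 0] (fun Δt : ℝ => Δt ^ 5) := by
  have hf1 : ContDiff ℝ 3 (lieDeriv R R) := ContDiff.lieDeriv (m := 3) hR (hR.of_le (by norm_num))
  have hexact := isBigO_sub_sum_iterate_lieDeriv (n := 3) hR
    (fun t ↦ (hy (tn + t)).comp_const_add tn t) 0
  have hstage := isBigO_comp_predictor_sub_taylor (R := R) (a := y tn) hf1
  have hthird : (lieDeriv R)^[3] R (y tn) = deriv (deriv (lieDeriv R R)) (y tn) * R (y tn) ^ 2 +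
      deriv (lieDeriv R R) (y tn) * lieDeriv R R (y tn) := by
    show deriv (fun x ↦ deriv (lieDeriv R R) x * R x) (y tn) * R (y tn) = _
    rw [deriv_fun_mul ((hf1.deriv' (n := 2)).differentiable two_ne_zero _)
      (hR.differentiable (by norm_num) _)]
    simp only [lieDeriv]
    ring
  simp only [Finset.sum_range_succ, Finset.sum_range_zero, add_zero, sub_zero] at hexact
  have hcorrection := ((isBigO_refl (fun t : ℝ ↦ t ^ 2) _).mul hstage).const_mul_left (1 / 3)
  refine (hexact.sub (hcorrection.congr_right fun t ↦ by ring)).congr (fun t ↦ ?_) (fun t ↦ rfl)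
  rw [hthird]
  simp only [Function.iterate_zero_apply, Function.iterate_succ_apply', lieDeriv, predictor,
    Nat.factorial]
  push_cast
  ring
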